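/- Let G = (V, E) be a connected graph containing a bridge k connecting components A = (V_A, E_A) and B = (V_B, E_B) (so E = E_A ∪ E_B ∪ {k}). Then the Shapley-Shubik index of k in the spanning connectivity game on G equals (1/|E|!) · Σ_{i,j} N_i(A) · N_j(B) · (i+j)! · (|E_A|+|E_B|−i−j)!, where N_i(A) and N_j(B) are the numbers of connected spanning subgraphs of A with i edges and of B with j edges, the sum ranging over |V_A|−1 ≤ i ≤ |E_A| and |V_B|−1 ≤ j ≤ |E_B|. -/

import Mathlib

/-!
Without the bridge `k` the graph is disconnected, so `k` lies in every winning coalition and is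
critical in each of them. A coalition `S ∋ k` wins exactly when its `A`-part and its `B`-part are
connected spanning subgraphs of `A` and `B`, so the Shapley-Shubik value of `k` is a sum over
pairs `(T, U)` of such subgraphs, with `|S| - 1 = |T| + |U|`. Grouping the pairs by `(|T|, |U|)`
gives the formula; `|T| ≥ |V_A| - 1` because every connected graph on `n` vertices has at least
`n - 1` edges.
-/

open Finset
open scoped Classical

/-- Reachability between vertices using only edges in the coalition `S`. -/
def Connects {V E : Type*} (ends : E → V × V) (S : Finset E) (a b : V) : Prop :=
  Relation.ReflTransGen (fun u w => ∃ e ∈ S, ends e = (u, w) ∨ ends e = (w, u)) a b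

/-- `(V, S)` is a connected spanning subgraph of the multigraph with edge-endpoint map `ends`. -/
def IsCSS {V E : Type*} (ends : E → V × V) (S : Finset E) : Prop :=
  ∀ a b : V, Connects ends S a b

/-- The Banzhaf value of player `p` in the simple game with winning predicate `win`:
the number of coalitions in which `p` is critical. -/
noncomputable def banzhafVal {E : Type*} [Fintype E] [DecidableEq E]
    (win : Finset E → Prop) (p : E) : ℕ :=
  (Finset.univ.filter (fun S : Finset E => p ∈ S ∧ win S ∧ ¬ win (S.erase p))).card

/-- The Banzhaf index of player `p`: its Banzhaf value divided by the sum of all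
Banzhaf values. -/
noncomputable def banzhafIdx {E : Type*} [Fintype E] [DecidableEq E]
    (win : Finset E → Prop) (p : E) : ℚ :=
  (banzhafVal win p : ℚ) / ∑ q : E, (banzhafVal win q : ℚ)

/-- The Shapley-Shubik value of player `p`:
`κ_p = Σ_{S ∋ p, win S, ¬ win (S \ {p})} (|S|-1)! (n-|S|)!`. -/
noncomputable def shapVal {E : Type*} [Fintype E] [DecidableEq E]
    (win : Finset E → Prop) (p : E) : ℕ :=
  ∑ S ∈ Finset.univ.filter (fun S : Finset E => p ∈ S ∧ win S ∧ ¬ win (S.erase p)),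
    (S.card - 1).factorial * (Fintype.card E - S.card).factorial

/-- The Shapley-Shubik index of player `p`: `φ_p = κ_p / n!`. -/
noncomputable def shapIdx {E : Type*} [Fintype E] [DecidableEq E]
    (win : Finset E → Prop) (p : E) : ℚ :=
  (shapVal win p : ℚ) / (Fintype.card E).factorial

/-- The graph `G` obtained from components `A` (endpoint map `endsA`) and `B` (endpoint map
`endsB`) by joining `a0 ∈ V_A` to `b0 ∈ V_B` with the bridge `none : Option (EA ⊕ EB)`. -/
def bridgeEnds {VA VB EA EB : Type*} (endsA : EA → VA × VA) (endsB : EB → VB × VB)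
    (a0 : VA) (b0 : VB) : Option (EA ⊕ EB) → (VA ⊕ VB) × (VA ⊕ VB)
  | none => (Sum.inl a0, Sum.inr b0)
  | some (Sum.inl e) => (Sum.inl (endsA e).1, Sum.inl (endsA e).2)
  | some (Sum.inr e) => (Sum.inr (endsB e).1, Sum.inr (endsB e).2)

namespace Connects
variable {V E : Type*} {ends : E → V × V} {S : Finset E} {a b : V}

theorem symm (h : Connects ends S a b) : Connects ends S b a := by
  induction h with
  | refl => exact Relation.ReflTransGen.refl
  | tail _ hstep ih =>
    obtain ⟨e, he, hends⟩ := hstep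
    exact Relation.ReflTransGen.head ⟨e, he, hends.symm⟩ ih

theorem map {W F : Type*} {ends' : F → W × W} {T : Finset F} (f : V → W)
    (hf : ∀ e ∈ S, Connects ends' T (f (ends e).1) (f (ends e).2))
    (h : Connects ends S a b) : Connects ends' T (f a) (f b) := by
  induction h with
  | refl => exact Relation.ReflTransGen.refl
  | tail _ hstep ih =>
    obtain ⟨e, he, hends | hends⟩ := hstep <;> have hstep' := hf e he <;> rw [hends] at hstep'
    · exact ih.trans hstep'
    · exact ih.trans hstep'.symm

theorem apply_eq {W : Type*} {f : V → W} (hf : ∀ e ∈ S, f (ends e).1 = f (ends e).2)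
    (h : Connects ends S a b) : f a = f b := by
  induction h with
  | refl => rfl
  | tail _ hstep ih =>
    obtain ⟨e, he, hends | hends⟩ := hstep <;> have hstep' := hf e he <;> rw [hends] at hstep'
    · exact ih.trans hstep'
    · exact ih.trans hstep'.symm

end Connects

def coalitionGraph {V E : Type*} (ends : E → V × V) (S : Finset E) : SimpleGraph V :=
  SimpleGraph.fromEdgeSet ((fun e => s((ends e).1, (ends e).2)) '' S)

theorem Connects.reachable {V E : Type*} {ends : E → V × V} {S : Finset E} {a b : V}
    (h : Connects ends S a b) : (coalitionGraph ends S).Reachable a b := by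
  induction h with
  | refl => rfl
  | @tail u w _ hstep ih =>
    obtain ⟨e, he, hends⟩ := hstep
    refine ih.trans ?_
    by_cases huw : u = w
    · rw [huw]
    · refine SimpleGraph.Adj.reachable <|
        (SimpleGraph.fromEdgeSet_adj _).2 ⟨⟨e, he, ?_⟩, huw⟩
      simpa [Sym2.mk_eq_mk_iff] using hends

theorem card_edgeSet_coalitionGraph_le {V E : Type*} (ends : E → V × V) (S : Finset E) :
    Nat.card (coalitionGraph ends S).edgeSet ≤ S.card := by
  rw [coalitionGraph, SimpleGraph.edgeSet_fromEdgeSet, Nat.card_coe_set_eq]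
  calc _ ≤ ((fun e => s((ends e).1, (ends e).2)) '' S).ncard :=
        Set.ncard_le_ncard Set.sdiff_subset ((S.finite_toSet).image _)
    _ ≤ (S : Set E).ncard := Set.ncard_image_le S.finite_toSet
    _ = S.card := Set.ncard_coe_finset S

theorem IsCSS.card_le_card_add_one {V E : Type*} [Fintype V] {ends : E → V × V}
    {S : Finset E} (h : IsCSS ends S) : Fintype.card V ≤ S.card + 1 := by
  cases isEmpty_or_nonempty V
  · simp
  have hconn : (coalitionGraph ends S).Connected :=
    (SimpleGraph.connected_iff_exists_forall_reachable _).2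
      ⟨Classical.arbitrary V, fun b => (h _ b).reachable⟩
  calc Fintype.card V = Nat.card V := Nat.card_eq_fintype_card.symm
    _ ≤ Nat.card (coalitionGraph ends S).edgeSet + 1 := hconn.card_vert_le_card_edgeSet_add_one
    _ ≤ S.card + 1 := by grw [card_edgeSet_coalitionGraph_le]

theorem IsCSS.card_mem_Icc {V E : Type*} [Fintype V] [Fintype E] {ends : E → V × V}
    {S : Finset E} (h : IsCSS ends S) : S.card ∈ Icc (Fintype.card V - 1) (Fintype.card E) :=
  mem_Icc.2 ⟨Nat.sub_le_of_le_add h.card_le_card_add_one, card_le_univ S⟩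

theorem shapVal_eq_sum_of_forall_mem {E : Type*} [Fintype E] [DecidableEq E]
    {win : Finset E → Prop} {p : E} (hp : ∀ S, win S → p ∈ S) :
    shapVal win p =
      ∑ S ∈ univ.filter win, (S.card - 1).factorial * (Fintype.card E - S.card).factorial := by
  rw [shapVal]
  congr 1
  ext S
  simp only [mem_filter, mem_univ, true_and]
  exact ⟨fun h => h.2.1, fun h => ⟨hp S h, h, fun h' => notMem_erase p S (hp _ h')⟩⟩

theorem sum_filter_card_eq_sum_mul {α : Type*} [Fintype α] {P : Finset α → Prop}
    {s : Finset ℕ} (hs : ∀ T, P T → T.card ∈ s) (g : ℕ → ℕ) :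
    ∑ T ∈ univ.filter P, g T.card =
      ∑ i ∈ s, #(univ.filter fun T => P T ∧ T.card = i) * g i := by
  rw [← sum_fiberwise_of_maps_to fun T hT => hs T (mem_filter.1 hT).2]
  refine sum_congr rfl fun i _ => ?_
  rw [filter_filter, sum_congr rfl fun T hT => by rw [(mem_filter.1 hT).2.2], sum_const,
    smul_eq_mul]

theorem sum_filter_sum_filter_card_eq_sum_mul {α β : Type*} [Fintype α] [Fintype β]
    {P : Finset α → Prop} {Q : Finset β → Prop} {s t : Finset ℕ}
    (hs : ∀ T, P T → T.card ∈ s) (ht : ∀ U, Q U → U.card ∈ t) (F : ℕ → ℕ → ℕ) :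
    ∑ T ∈ univ.filter P, ∑ U ∈ univ.filter Q, F T.card U.card =
      ∑ i ∈ s, ∑ j ∈ t, #(univ.filter fun T => P T ∧ T.card = i) *
        #(univ.filter fun U => Q U ∧ U.card = j) * F i j := by
  rw [sum_congr rfl fun T _ => sum_filter_card_eq_sum_mul ht (F T.card),
    sum_filter_card_eq_sum_mul hs
      fun i => ∑ j ∈ t, #(univ.filter fun U => Q U ∧ U.card = j) * F i j]
  simp_rw [mul_sum, mul_assoc]

section Bridge
variable {VA VB EA EB : Type*} {endsA : EA → VA × VA} {endsB : EB → VB × VB}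
  {a0 : VA} {b0 : VB}

theorem none_mem_of_isCSS_bridgeEnds {S : Finset (Option (EA ⊕ EB))}
    (h : IsCSS (bridgeEnds endsA endsB a0 b0) S) : none ∈ S := by
  by_contra hS
  have hside := (h (.inl a0) (.inr b0)).apply_eq (f := Sum.isLeft) ?_
  · simp at hside
  · rintro (_ | e | e) he
    · exact absurd he hS
    all_goals rfl

theorem isCSS_bridgeEnds_iff {S : Finset (Option (EA ⊕ EB))} :
    IsCSS (bridgeEnds endsA endsB a0 b0) S ↔
      none ∈ S ∧ IsCSS endsA (eraseNone S).toLeft ∧ IsCSS endsB (eraseNone S).toRight := by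
  refine ⟨fun h => ⟨none_mem_of_isCSS_bridgeEnds h, fun a a' => ?_, fun b b' => ?_⟩, ?_⟩
  · refine (h (.inl a) (.inl a')).map (Sum.elim id fun _ => a0) ?_
    rintro (_ | e | e) he
    · exact Relation.ReflTransGen.refl
    · exact .single ⟨e, by simpa using he, .inl rfl⟩
    · exact Relation.ReflTransGen.refl
  · refine (h (.inr b) (.inr b')).map (Sum.elim (fun _ => b0) id) ?_
    rintro (_ | e | e) he
    · exact Relation.ReflTransGen.refl
    · exact Relation.ReflTransGen.refl
    · exact .single ⟨e, by simpa using he, .inl rfl⟩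
  · rintro ⟨hS, hA, hB⟩
    have hbase : ∀ x, Connects (bridgeEnds endsA endsB a0 b0) S x (.inl a0) := by
      rintro (a | b)
      · refine (hA a a0).map Sum.inl fun e he => ?_
        exact .single ⟨some (.inl e), by simpa using he, .inl rfl⟩
      · refine ((hB b b0).map Sum.inr fun e he => ?_).tail ⟨none, hS, .inr rfl⟩
        exact .single ⟨some (.inr e), by simpa using he, .inl rfl⟩
    exact fun x y => (hbase x).trans (hbase y).symm

theorem shapVal_bridgeEnds [Fintype EA] [Fintype EB] [DecidableEq EA] [DecidableEq EB] :
    shapVal (IsCSS (bridgeEnds endsA endsB a0 b0)) none =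
      ∑ T ∈ univ.filter (IsCSS endsA), ∑ U ∈ univ.filter (IsCSS endsB),
        (T.card + U.card).factorial *
          (Fintype.card EA + Fintype.card EB - T.card - U.card).factorial := by
  rw [shapVal_eq_sum_of_forall_mem fun S => none_mem_of_isCSS_bridgeEnds, ← sum_product']
  symm
  refine sum_nbij' (fun p => insertNone (p.1.disjSum p.2))
    (fun S => ((eraseNone S).toLeft, (eraseNone S).toRight)) ?_ ?_ ?_ ?_ ?_
  · simp [isCSS_bridgeEnds_iff]
  · simp +contextual [isCSS_bridgeEnds_iff]
  · simp
  · intro S hS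
    rw [mem_filter, isCSS_bridgeEnds_iff] at hS
    simp [toLeft_disjSum_toRight, insertNone_eraseNone, hS.2.1]
  · intro p _
    simp only [card_insertNone, card_disjSum, Fintype.card_option, Fintype.card_sum]
    congr 2; omega

end Bridge

theorem stmt_14_general {VA VB EA EB : Type*} [Fintype VA] [Fintype VB] [Fintype EA] [Fintype EB]
    [DecidableEq EA] [DecidableEq EB]
    (endsA : EA → VA × VA) (endsB : EB → VB × VB) (a0 : VA) (b0 : VB) :
    shapIdx (IsCSS (bridgeEnds endsA endsB a0 b0)) (none : Option (EA ⊕ EB))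
      = (1 / ((Fintype.card EA + Fintype.card EB + 1).factorial : ℚ))
        * ∑ i ∈ Finset.Icc (Fintype.card VA - 1) (Fintype.card EA),
            ∑ j ∈ Finset.Icc (Fintype.card VB - 1) (Fintype.card EB),
              ((Finset.univ.filter
                  (fun S : Finset EA => IsCSS endsA S ∧ S.card = i)).card : ℚ)
                * ((Finset.univ.filter
                    (fun S : Finset EB => IsCSS endsB S ∧ S.card = j)).card : ℚ)
                * ((i + j).factorial : ℚ)
                * (((Fintype.card EA + Fintype.card EB - i - j).factorial : ℚ)) := by
  have hval := (shapVal_bridgeEnds (endsA := endsA) (endsB := endsB) (a0 := a0) (b0 := b0)).trans <|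
    sum_filter_sum_filter_card_eq_sum_mul (fun _ => IsCSS.card_mem_Icc)
      (fun _ => IsCSS.card_mem_Icc)
      fun i j => (i + j).factorial * (Fintype.card EA + Fintype.card EB - i - j).factorial
  rw [shapIdx, hval, Fintype.card_option, Fintype.card_sum, div_eq_inv_mul, one_div]
  push_cast
  simp_rw [mul_assoc]

/-- For a connected graph with a bridge `k` joining connected components `A` and `B`, the
Shapley-Shubik index of `k` in the spanning connectivity game equals
`(1/|E|!) Σ_{i=|V_A|−1}^{|E_A|} Σ_{j=|V_B|−1}^{|E_B|} N_i(A) N_j(B) (i+j)! (|E_A|+|E_B|−i−j)!`. -/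
theorem stmt_14 {VA VB EA EB : Type*} [Fintype VA] [Fintype VB] [Fintype EA] [Fintype EB]
    [DecidableEq EA] [DecidableEq EB]
    (endsA : EA → VA × VA) (endsB : EB → VB × VB) (a0 : VA) (b0 : VB)
    (hA : IsCSS endsA (Finset.univ : Finset EA))
    (hB : IsCSS endsB (Finset.univ : Finset EB)) :
    shapIdx (IsCSS (bridgeEnds endsA endsB a0 b0)) (none : Option (EA ⊕ EB))
      = (1 / ((Fintype.card EA + Fintype.card EB + 1).factorial : ℚ))
        * ∑ i ∈ Finset.Icc (Fintype.card VA - 1) (Fintype.card EA),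
            ∑ j ∈ Finset.Icc (Fintype.card VB - 1) (Fintype.card EB),
              ((Finset.univ.filter
                  (fun S : Finset EA => IsCSS endsA S ∧ S.card = i)).card : ℚ)
                * ((Finset.univ.filter
                    (fun S : Finset EB => IsCSS endsB S ∧ S.card = j)).card : ℚ)
                * ((i + j).factorial : ℚ)
                * (((Fintype.card EA + Fintype.card EB - i - j).factorial : ℚ)) :=
  stmt_14_general endsA endsB a0 b0
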